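/- arXiv:0906.3330 — 3 statements merged into one kernel-verified Lean document; each statement's English description precedes it below -/
import Mathlib

section
/- The left Kan extension functor Lan_N : (𝔅A ⥤ [Cᵒᵖ, Type]) ⥤ ([Aᵒᵖ, Type] ⥤ [Cᵒᵖ, Type]), given by pointwise left Kan extension along N (which exists since 𝔅A is small and [Cᵒᵖ, Type] is cocomplete), is a conservative functor: if a natural transformation α between functors 𝔅A ⥤ [Cᵒᵖ, Type] becomes an isomorphism after applying Lan_N, then α is an isomorphism. -/
open CategoryTheory Limits

universe u

noncomputable section

variable (A : Type u) [SmallCategory A]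

/-- An object of the free finite-coproduct completion `Fam A` of `A`:
a finite family of objects of `A`. -/
structure FamObj : Type u where
  n : ℕ
  fam : Fin n → A

variable {A}

/-- The presheaf associated to an object of `Fam A`: the corresponding finite coproduct
of representables in `[Aᵒᵖ, Type]`. -/
def FamObj.presheaf (x : FamObj A) : Aᵒᵖ ⥤ Type u :=
  ∐ fun i => yoneda.obj (x.fam i)

variable (A)

/-- The free finite-coproduct completion of `A`, realized as the (induced) full subcategory
of `[Aᵒᵖ, Type]` spanned by finite coproducts of representables. -/
def Fam : Type u := InducedCategory (Aᵒᵖ ⥤ Type u) (FamObj.presheaf (A := A))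

instance : Category (Fam A) := InducedCategory.instCategory

/-- The groupoid `𝔅A`: the core of the free finite-coproduct completion of `A`,
i.e. the groupoid of all isomorphisms in `Fam A`. -/
def BGrpd : Type u := CategoryTheory.Core (Fam A)

instance : Groupoid (BGrpd A) := inferInstanceAs (Groupoid (Core (Fam A)))

/-- The canonical "inclusion" functor `N : 𝔅A ⥤ [Aᵒᵖ, Type]`. -/
def N : BGrpd A ⥤ (Aᵒᵖ ⥤ Type u) :=
  Core.inclusion (Fam A) ⋙ inducedFunctor (FamObj.presheaf (A := A))

/-!
For `x : 𝔅A`, the arrows `j : N y ⟶ N x` that are isomorphisms form a union of connected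
components of the comma category `N ↓ N x`, and since `N` is full and faithful on isomorphisms,
`(x, 𝟙)` is terminal in it. So the colimit computing `(Lan_N F)(N x)` contains `F x` as a summand:
lifting isomorphisms on that part and sending the rest to a point gives a retraction
`(Lan_N F)(N x) → Option (F x)` of the unit, natural in `F`. Thus `α x` is a retract of
`(Lan_N α)(N x)` up to the extra point, and is invertible whenever `(Lan_N α)(N x)` is; colimits
in `[Cᵒᵖ, Type]` being pointwise, it suffices to argue in `Type`.
-/

universe w

theorem Function.Bijective.of_option_retract {X X' Y Y' : Type*} {α : X → X'} {β : Y → Y'}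
    {s : X → Y} {s' : X' → Y'} {r : Y → Option X} {r' : Y' → Option X'}
    (hr : ∀ a, r (s a) = some a) (hr' : ∀ b, r' (s' b) = some b)
    (hs : ∀ a, β (s a) = s' (α a)) (hrβ : ∀ y, r' (β y) = Option.map α (r y))
    (hβ : Function.Bijective β) : Function.Bijective α := by
  refine ⟨fun a b hab => ?_, fun b => ?_⟩
  · have : s a = s b := hβ.injective (by rw [hs, hs, hab])
    simpa [hr] using congrArg r this
  · obtain ⟨y, hy⟩ := hβ.surjective (s' b)
    have : Option.map α (r y) = some b := by rw [← hrβ, hy, hr']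
    obtain ⟨a, -, rfl⟩ := Option.map_eq_some_iff.mp this
    exact ⟨a, rfl⟩

namespace CategoryTheory

def Functor.FullyFaithful.core {C D : Type*} [Category C] [Category D] {F : C ⥤ D}
    (hF : F.FullyFaithful) : F.core.FullyFaithful where
  preimage f := ⟨hF.preimageIso f.iso⟩
  map_preimage f := by ext; exact hF.map_preimage _
  preimage_map f := by ext; exact hF.preimage_map _

namespace Functor

open Limits

variable {G : Type*} [Groupoid G] {E : Type*} [Category E] {N : G ⥤ E}

section

variable (hN : (Core.functorToCore N).FullyFaithful)

def FullyFaithful.preimageOfIsIso {x y : G} (φ : N.obj y ⟶ N.obj x) [IsIso φ] : y ⟶ x :=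
  hN.preimage (CoreHom.mk (asIso φ : N.obj y ≅ N.obj x))

@[simp]
lemma FullyFaithful.map_preimageOfIsIso {x y : G} (φ : N.obj y ⟶ N.obj x) [IsIso φ] :
    N.map (hN.preimageOfIsIso φ) = φ :=
  congrArg (fun f => f.iso.hom) (hN.map_preimage (CoreHom.mk (asIso φ : N.obj y ≅ N.obj x)))

lemma FullyFaithful.preimageOfIsIso_eq_iff {x y : G} (φ : N.obj y ⟶ N.obj x) [IsIso φ]
    (ψ : y ⟶ x) : hN.preimageOfIsIso φ = ψ ↔ N.map ψ = φ := by
  refine ⟨fun h => h ▸ hN.map_preimageOfIsIso φ, fun h => ?_⟩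
  exact hN.map_injective (Core.hom_ext ((hN.map_preimageOfIsIso φ).trans h.symm))

open Classical in
def retractionCocone (h : G ⥤ Type w) (x : G) :
    Cocone (CostructuredArrow.proj N (N.obj x) ⋙ h) where
  pt := Option (h.obj x)
  ι :=
  { app j := TypeCat.ofHom fun s =>
      if _ : IsIso j.hom then some (h.map (hN.preimageOfIsIso j.hom) s) else none
    naturality j j' χ := by
      ext s
      have hw : N.map χ.left ≫ j'.hom = j.hom := CostructuredArrow.w χ
      by_cases hj' : IsIso j'.hom
      · have : IsIso j.hom := hw ▸ inferInstance
        have hcomp : hN.preimageOfIsIso j.hom = χ.left ≫ hN.preimageOfIsIso j'.hom := by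
          rw [FullyFaithful.preimageOfIsIso_eq_iff, N.map_comp,
            FullyFaithful.map_preimageOfIsIso, hw]
        simp [hj', this, hcomp]
        rfl
      · have : ¬ IsIso j.hom := by
          rw [← hw]
          exact fun _ => hj' (IsIso.of_isIso_comp_left (N.map χ.left) j'.hom)
        simp [hj', this] }

open Classical in
lemma retractionCocone_ι_app_apply (h : G ⥤ Type w) (x : G) (j : CostructuredArrow N (N.obj x))
    (s : h.obj j.left) :
    (retractionCocone hN h x).ι.app j s =
      if _ : IsIso j.hom then some (h.map (hN.preimageOfIsIso j.hom) s) else none :=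
  rfl

lemma retractionCocone_ι_app_mk_id (h : G ⥤ Type w) (x : G) (s : h.obj x) :
    (retractionCocone hN h x).ι.app (CostructuredArrow.mk (𝟙 (N.obj x))) s = some s := by
  have : hN.preimageOfIsIso (𝟙 (N.obj x)) = 𝟙 x := by
    rw [FullyFaithful.preimageOfIsIso_eq_iff, N.map_id]
  rw [retractionCocone_ι_app_apply]
  simp [this, IsIso.id]
  rfl

lemma option_map_retractionCocone_ι_app {f g : G ⥤ Type w} (α : f ⟶ g) {x : G}
    (j : CostructuredArrow N (N.obj x)) (s : f.obj j.left) :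
    Option.map (α.app x) ((retractionCocone hN f x).ι.app j s) =
      (retractionCocone hN g x).ι.app j (α.app j.left s) := by
  rw [retractionCocone_ι_app_apply, retractionCocone_ι_app_apply]
  by_cases hj : IsIso j.hom <;> simp [hj]

end

theorem bijective_app_of_isColimit (hN : (Core.functorToCore N).FullyFaithful)
    {f g : G ⥤ Type w} (α : f ⟶ g) {x : G}
    {cf : Cocone (CostructuredArrow.proj N (N.obj x) ⋙ f)}
    {cg : Cocone (CostructuredArrow.proj N (N.obj x) ⋙ g)} (hf : IsColimit cf) (hg : IsColimit cg)
    (β : cf.pt ⟶ cg.pt) (hβ : ∀ j, cf.ι.app j ≫ β =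
      (whiskerLeft (CostructuredArrow.proj N (N.obj x)) α).app j ≫ cg.ι.app j)
    (hβ_bij : Function.Bijective β) : Function.Bijective (α.app x) := by
  let e₀ := CostructuredArrow.mk (𝟙 (N.obj x))
  have hrβ : β ≫ hg.desc (retractionCocone hN g x) =
      hf.desc (retractionCocone hN f x) ≫ (TypeCat.ofHom (Option.map (α.app x)) :
        (retractionCocone hN f x).pt ⟶ (retractionCocone hN g x).pt) :=
    hf.hom_ext fun j => by
      rw [← Category.assoc, hβ j, Category.assoc, hg.fac, hf.fac_assoc]
      ext s
      exact (option_map_retractionCocone_ι_app hN α j s).symm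
  refine Function.Bijective.of_option_retract (s := cf.ι.app e₀) (s' := cg.ι.app e₀)
    (fun a => ?_) (fun b => ?_) (fun a => ?_) (ConcreteCategory.congr_hom hrβ) hβ_bij
  · exact (ConcreteCategory.congr_hom (hf.fac _ e₀) a).trans
      (retractionCocone_ι_app_mk_id hN f x a)
  · exact (ConcreteCategory.congr_hom (hg.fac _ e₀) b).trans
      (retractionCocone_ι_app_mk_id hN g x b)
  · exact ConcreteCategory.congr_hom (hβ e₀) a

end Functor

theorem Functor.reflectsIsomorphisms_lan {G : Type w} [Groupoid.{w} G] {E : Type*}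
    [Category.{w} E] {N : G ⥤ E} (hN : (Core.functorToCore N).FullyFaithful)
    (K : Type*) [Category K] : (N.lan (H := K ⥤ Type w)).ReflectsIsomorphisms where
  reflects {f g} α _ := by
    have (x : G) (k : K) : IsIso ((α.app x).app k) := by
      let ev := (evaluation K (Type w)).obj k
      have hleg (j : CostructuredArrow N (N.obj x)) :
          (N.lanUnit.app f).app j.left ≫ (N.lan.obj f).map j.hom ≫ (N.lan.map α).app (N.obj x) =
            α.app j.left ≫ (N.lanUnit.app g).app j.left ≫ (N.lan.obj g).map j.hom := by
        rw [NatTrans.naturality, ← Category.assoc, ← Category.assoc]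
        exact congrArg (· ≫ _) (congr_app (N.lanUnit.naturality α) j.left).symm
      have hβ : IsIso (((N.lan.map α).app (N.obj x)).app k) := inferInstance
      rw [isIso_iff_bijective]
      exact bijective_app_of_isColimit hN (whiskerRight α ev)
        (Limits.isColimitOfPreserves ev
          (N.isPointwiseLeftKanExtensionLeftKanExtensionUnit f (N.obj x)))
        (Limits.isColimitOfPreserves ev
          (N.isPointwiseLeftKanExtensionLeftKanExtensionUnit g (N.obj x)))
        (((N.lan.map α).app (N.obj x)).app k) (fun j => congr_app (hleg j) k)
        ((isIso_iff_bijective _).mp hβ)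
    have (x : G) : IsIso (α.app x) := NatIso.isIso_of_isIso_app _
    exact NatIso.isIso_of_isIso_app _

end CategoryTheory

/-- The left Kan extension functor
`Lan_N : (𝔅A ⥤ [Cᵒᵖ, Type]) ⥤ ([Aᵒᵖ, Type] ⥤ [Cᵒᵖ, Type])`, given by pointwise left Kan
extension along `N`, is conservative: if a natural transformation `α` between functors
`𝔅A ⥤ [Cᵒᵖ, Type]` becomes an isomorphism after applying `Lan_N`, then `α` is an
isomorphism. -/
theorem lan_along_N_conservative (C : Type u) [SmallCategory C]
    {f g : BGrpd A ⥤ (Cᵒᵖ ⥤ Type u)} (α : f ⟶ g)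
    (H : IsIso ((N A).lan.map α)) : IsIso α :=
  (Functor.reflectsIsomorphisms_lan (N := N A) (fullyFaithfulInducedFunctor _).core Cᵒᵖ).reflects α

end
end

section
/- The Cayley functor (A ⥤ Type) ⥤ ((A ⥤ Type) ⥤ (A ⥤ Type)) sending f to the endofunctor f ⊛ − (Day convolution with f on the left) admits a strong monoidal structure from the Day convolution monoidal structure on A ⥤ Type to the composition monoidal structure on the endofunctor category of A ⥤ Type: the unit J is sent to an endofunctor isomorphic to the identity, and (f ⊛ g) ⊛ − is naturally isomorphic to the composite of f ⊛ − and g ⊛ −, coherently; moreover this Cayley functor is conservative. -/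
open CategoryTheory MonoidalCategory

universe u

variable {A : Type u} [SmallCategory A] [MonoidalCategory A]

/-- An element of the coend `∫^{x,y} A(x ⊗ y, c) × f(x) × g(y)` defining the
Day convolution `(f ⊛ g)(c)`. -/
structure DayEl (f g : A ⥤ Type u) (c : A) : Type u where
  X : A
  Y : A
  k : X ⊗ Y ⟶ c
  s : f.obj X
  t : g.obj Y

/-- The relation defining the coend `∫^{x,y} A(x ⊗ y, c) × f(x) × g(y)`. -/
inductive DayRel (f g : A ⥤ Type u) (c : A) : DayEl f g c → DayEl f g c → Prop
  | step {X X' Y Y' : A} (u : X ⟶ X') (v : Y ⟶ Y') (k : X' ⊗ Y' ⟶ c)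
      (s : f.obj X) (t : g.obj Y) :
      DayRel f g c ⟨X, Y, (u ⊗ₘ v) ≫ k, s, t⟩ ⟨X', Y', k, f.map u s, g.map v t⟩

/-- The Day convolution `(f ⊛ g)(c) = ∫^{x,y} A(x ⊗ y, c) × f(x) × g(y)` as a set. -/
def dayObj (f g : A ⥤ Type u) (c : A) : Type u := Quot (DayRel f g c)

/-- The Day convolution `f ⊛ g` of `f, g : A ⥤ Type`. -/
def dayFunctor (f g : A ⥤ Type u) : A ⥤ Type u where
  obj c := dayObj f g c
  map {c c'} h := TypeCat.ofHom (Quot.lift (fun e => Quot.mk _ ⟨e.X, e.Y, e.k ≫ h, e.s, e.t⟩)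
    (by
      rintro _ _ ⟨u, v, k, s, t⟩
      dsimp
      rw [Category.assoc]
      exact Quot.sound (DayRel.step u v (k ≫ h) s t)))
  map_id c := by
    ext e
    induction e using Quot.ind
    show Quot.mk _ _ = Quot.mk _ _
    simp
  map_comp {c c' c''} h h' := by
    ext e
    induction e using Quot.ind
    show Quot.mk _ _ = Quot.mk _ _
    simp

/-- Functoriality of the Day convolution in the left variable. -/
def dayMapL {f f' : A ⥤ Type u} (α : f ⟶ f') (g : A ⥤ Type u) :
    dayFunctor f g ⟶ dayFunctor f' g where
  app c := TypeCat.ofHom (Quot.lift (fun e => Quot.mk _ ⟨e.X, e.Y, e.k, α.app e.X e.s, e.t⟩)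
    (by
      rintro _ _ ⟨u, v, k, s, t⟩
      dsimp
      rw [FunctorToTypes.naturality]
      exact Quot.sound (DayRel.step u v k (α.app _ s) t)))
  naturality c c' h := by
    ext e
    induction e using Quot.ind
    rfl

/-- Functoriality of the Day convolution in the right variable. -/
def dayMapR (f : A ⥤ Type u) {g g' : A ⥤ Type u} (β : g ⟶ g') :
    dayFunctor f g ⟶ dayFunctor f g' where
  app c := TypeCat.ofHom (Quot.lift (fun e => Quot.mk _ ⟨e.X, e.Y, e.k, e.s, β.app e.Y e.t⟩)
    (by
      rintro _ _ ⟨u, v, k, s, t⟩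
      dsimp
      rw [FunctorToTypes.naturality]
      exact Quot.sound (DayRel.step u v k s (β.app _ t))))
  naturality c c' h := by
    ext e
    induction e using Quot.ind
    rfl

variable (A) in
/-- The Day convolution as a bifunctor `(A ⥤ Type) ⥤ (A ⥤ Type) ⥤ (A ⥤ Type)`. -/
def dayBi : (A ⥤ Type u) ⥤ (A ⥤ Type u) ⥤ (A ⥤ Type u) where
  obj f :=
    { obj := fun g => dayFunctor f g
      map := fun β => dayMapR f β
      map_id := by
        intro g
        ext c e
        induction e using Quot.ind
        rfl
      map_comp := by
        intro g g' g'' β β'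
        ext c e
        induction e using Quot.ind
        rfl }
  map {f f'} α :=
    { app := fun g => dayMapL α g
      naturality := by
        intro g g' β
        ext c e
        induction e using Quot.ind
        rfl }
  map_id f := by
    ext g c e
    induction e using Quot.ind
    rfl
  map_comp α α' := by
    ext g c e
    induction e using Quot.ind
    rfl

variable (A) in
/-- The unit for Day convolution: the covariant representable at the monoidal unit. -/
def dayUnit : A ⥤ Type u := coyoneda.obj (Opposite.op (𝟙_ A))

@[simp]
lemma dayFunctor_map_mk (f g : A ⥤ Type u) {c c' : A} (h : c ⟶ c') (e : DayEl f g c) :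
    (dayFunctor f g).map h (Quot.mk _ e) = Quot.mk _ ⟨e.X, e.Y, e.k ≫ h, e.s, e.t⟩ :=
  rfl

lemma dayStep {f g : A ⥤ Type u} {c : A} {X X' Y Y' : A} (u : X ⟶ X') (v : Y ⟶ Y')
    (k : X' ⊗ Y' ⟶ c) (s : f.obj X) (t : g.obj Y)
    {k' : X ⊗ Y ⟶ c} (hk : k' = (u ⊗ₘ v) ≫ k) {s' : f.obj X'} (hs : s' = f.map u s)
    {t' : g.obj Y'} (ht : t' = g.map v t) :
    Quot.mk (DayRel f g c) ⟨X, Y, k', s, t⟩ = Quot.mk (DayRel f g c) ⟨X', Y', k, s', t'⟩ := by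
  subst hk hs ht
  exact Quot.sound (DayRel.step u v k s t)

set_option maxHeartbeats 1000000 in
/-- The associator `(f ⊛ g) ⊛ h ≅ f ⊛ (g ⊛ h)` for Day convolution. -/
def dayAssoc (f g h : A ⥤ Type u) :
    dayFunctor (dayFunctor f g) h ≅ dayFunctor f (dayFunctor g h) where
  hom :=
    { app := fun c => TypeCat.ofHom (Quot.lift
        (fun e => Quot.lift
          (fun q => Quot.mk _ (⟨q.X, q.Y ⊗ e.Y,
              (α_ q.X q.Y e.Y).inv ≫ (q.k ▷ e.Y) ≫ e.k, q.s,
              Quot.mk _ ⟨q.Y, e.Y, 𝟙 _, q.t, e.t⟩⟩ : DayEl f (dayFunctor g h) c))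
          (by
            rintro _ _ ⟨u, v, l, s, s'⟩
            dsimp
            refine dayStep (g := dayFunctor g h) u (v ▷ e.Y) _ s _ ?_ rfl ?_
            · simp [MonoidalCategory.tensorHom_def]
            · rw [dayFunctor_map_mk]
              exact (dayStep v (𝟙 e.Y) (𝟙 _) s' e.t (by simp) rfl (by simp)).symm)
          e.s)
        (by
          rintro _ _ ⟨u, w, k, q, t⟩
          induction q using Quot.ind with | _ q =>
          obtain ⟨x, y, l, s, s'⟩ := q
          dsimp only [dayFunctor_map_mk]
          show Quot.mk _ _ = Quot.mk _ _
          refine dayStep (g := dayFunctor g h) (𝟙 x) (y ◁ w) _ s _ ?_ (by simp) ?_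
          · rw [id_tensorHom, associator_inv_naturality_right_assoc]
            simp only [comp_whiskerRight, Category.assoc, whisker_exchange_assoc]
            simp [MonoidalCategory.tensorHom_def]
          · rw [dayFunctor_map_mk]
            exact (dayStep (𝟙 y) w (𝟙 _) s' t (by simp) (by simp) rfl).symm))
      naturality := by
        intro c c' m
        ext e
        induction e using Quot.ind with | _ e =>
        obtain ⟨X, Y, k, q, t⟩ := e
        induction q using Quot.ind with | _ q =>
        show Quot.mk _ _ = Quot.mk _ _
        simp }
  inv :=
    { app := fun c => TypeCat.ofHom (Quot.lift
        (fun e => Quot.lift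
          (fun q => Quot.mk _ (⟨e.X ⊗ q.X, q.Y,
              (α_ e.X q.X q.Y).hom ≫ (e.X ◁ q.k) ≫ e.k,
              Quot.mk _ ⟨e.X, q.X, 𝟙 _, e.s, q.s⟩, q.t⟩ : DayEl (dayFunctor f g) h c))
          (by
            rintro _ _ ⟨u, v, l, s, s'⟩
            dsimp
            refine dayStep (f := dayFunctor f g) (e.X ◁ u) v _ _ s' ?_ ?_ rfl
            · rw [← id_tensorHom e.X u]
              rw [associator_naturality_assoc]
              simp [MonoidalCategory.tensorHom_def]
            · rw [dayFunctor_map_mk]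
              exact (dayStep (𝟙 e.X) u (𝟙 _) e.s s (by simp) (by simp) rfl).symm)
          e.t)
        (by
          rintro _ _ ⟨u, w, k, s, q⟩
          induction q using Quot.ind with | _ q =>
          obtain ⟨y, z, m, s', t⟩ := q
          dsimp only [dayFunctor_map_mk]
          show Quot.mk _ _ = Quot.mk _ _
          refine dayStep (f := dayFunctor f g) (u ▷ y) (𝟙 z) _ _ t ?_ ?_ (by simp)
          · rw [tensorHom_id, associator_naturality_left_assoc, ← whisker_exchange_assoc,
              tensorHom_def' u w]
            simp only [← MonoidalCategory.whiskerLeft_comp_assoc, Category.assoc]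
          · rw [dayFunctor_map_mk]
            exact (dayStep u (𝟙 y) (𝟙 _) s s' (by simp) rfl (by simp)).symm))
      naturality := by
        intro c c' m
        ext e
        induction e using Quot.ind with | _ e =>
        obtain ⟨X, Y, k, s, q⟩ := e
        induction q using Quot.ind with | _ q =>
        show Quot.mk _ _ = Quot.mk _ _
        simp }
  hom_inv_id := by
    ext c e
    induction e using Quot.ind with | _ e =>
    obtain ⟨X, Y, k, q, t⟩ := e
    induction q using Quot.ind with | _ q =>
    obtain ⟨x, y, l, s, s'⟩ := q
    show Quot.mk _ _ = Quot.mk _ _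
    exact dayStep (f := dayFunctor f g) l (𝟙 Y) k _ t (by simp)
      (by rw [dayFunctor_map_mk]; simp; rfl) (by simp)
  inv_hom_id := by
    ext c e
    induction e using Quot.ind with | _ e =>
    obtain ⟨X, W, k, s, q⟩ := e
    induction q using Quot.ind with | _ q =>
    obtain ⟨y, z, m, s', t⟩ := q
    show Quot.mk _ _ = Quot.mk _ _
    exact dayStep (g := dayFunctor g h) (𝟙 X) m k s _ (by simp)
      (by simp) (by rw [dayFunctor_map_mk]; simp; rfl)

@[simp]
lemma dayUnit_map {x y : A} (u : x ⟶ y) (s : (dayUnit A).obj x) :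
    (dayUnit A).map u s = (s : 𝟙_ A ⟶ x) ≫ u :=
  rfl

/-- The left unitor `J ⊛ f ≅ f` for Day convolution, where `J = A(I, −)`. -/
def dayLeftUnitor (f : A ⥤ Type u) : dayFunctor (dayUnit A) f ≅ f where
  hom :=
    { app := fun c => TypeCat.ofHom (Quot.lift
        (fun e => f.map ((λ_ e.Y).inv ≫ ((e.s : 𝟙_ A ⟶ e.X) ▷ e.Y) ≫ e.k) e.t)
        (by
          rintro _ _ ⟨u, v, k, s, t⟩
          dsimp
          rw [← FunctorToTypes.map_comp_apply]
          rw [leftUnitor_inv_naturality_assoc]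
          simp only [comp_whiskerRight, Category.assoc, whisker_exchange_assoc]
          simp [MonoidalCategory.tensorHom_def]
          erw [comp_whiskerRight]
          simp))
      naturality := by
        intro c c' m
        ext e
        induction e using Quot.ind with | _ e =>
        show f.map _ e.t = f.map m (f.map _ e.t)
        rw [← FunctorToTypes.map_comp_apply]
        simp }
  inv :=
    { app := fun c => TypeCat.ofHom (fun t => Quot.mk _ ⟨𝟙_ A, c, (λ_ c).hom, 𝟙 (𝟙_ A), t⟩)
      naturality := by
        intro c c' m
        ext t
        exact (dayStep (f := dayUnit A) (𝟙 (𝟙_ A)) m (λ_ c').hom (𝟙 _) t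
          (by rw [id_tensorHom, MonoidalCategory.leftUnitor_naturality])
          (by simp; rfl) rfl).symm }
  hom_inv_id := by
    ext c e
    induction e using Quot.ind with | _ e =>
    obtain ⟨X, Y, k, s, t⟩ := e
    show Quot.mk _ _ = Quot.mk _ _
    refine ((dayStep (f := dayUnit A) (𝟙 (𝟙_ A)) ((λ_ Y).inv ≫ ((s : 𝟙_ A ⟶ X) ▷ Y) ≫ k)
      (λ_ c).hom (𝟙 _) t rfl (by simp; rfl) rfl).symm).trans ?_
    refine dayStep (f := dayUnit A) (s : 𝟙_ A ⟶ X) (𝟙 Y) k (𝟙 _) t ?_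
      (Category.id_comp (s : 𝟙_ A ⟶ X)).symm (by simp)
    erw [id_tensorHom, MonoidalCategory.leftUnitor_naturality, Iso.hom_inv_id_assoc,
      tensorHom_id]
  inv_hom_id := by
    ext c t
    show f.map _ t = t
    simp

/-- The right unitor `f ⊛ J ≅ f` for Day convolution, where `J = A(I, −)`. -/
def dayRightUnitor (f : A ⥤ Type u) : dayFunctor f (dayUnit A) ≅ f where
  hom :=
    { app := fun c => TypeCat.ofHom (Quot.lift
        (fun e => f.map ((ρ_ e.X).inv ≫ (e.X ◁ (e.t : 𝟙_ A ⟶ e.Y)) ≫ e.k) e.s)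
        (by
          rintro _ _ ⟨u, v, k, s, t⟩
          dsimp
          rw [← FunctorToTypes.map_comp_apply]
          rw [rightUnitor_inv_naturality_assoc, ← whisker_exchange_assoc, tensorHom_def' u v]
          simp only [← MonoidalCategory.whiskerLeft_comp_assoc, Category.assoc]
          erw [MonoidalCategory.whiskerLeft_comp]
          simp))
      naturality := by
        intro c c' m
        ext e
        induction e using Quot.ind with | _ e =>
        show f.map _ e.s = f.map m (f.map _ e.s)
        rw [← FunctorToTypes.map_comp_apply]
        simp }
  inv :=
    { app := fun c => TypeCat.ofHom (fun s => Quot.mk _ ⟨c, 𝟙_ A, (ρ_ c).hom, s, 𝟙 (𝟙_ A)⟩)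
      naturality := by
        intro c c' m
        ext s
        exact (dayStep (g := dayUnit A) m (𝟙 (𝟙_ A)) (ρ_ c').hom s (𝟙 _)
          (by rw [tensorHom_id, MonoidalCategory.rightUnitor_naturality])
          rfl (by simp; rfl)).symm }
  hom_inv_id := by
    ext c e
    induction e using Quot.ind with | _ e =>
    obtain ⟨X, Y, k, s, t⟩ := e
    show Quot.mk _ _ = Quot.mk _ _
    refine ((dayStep (g := dayUnit A) ((ρ_ X).inv ≫ (X ◁ (t : 𝟙_ A ⟶ Y)) ≫ k) (𝟙 (𝟙_ A))
      (ρ_ c).hom s (𝟙 _) rfl rfl (by simp; rfl)).symm).trans ?_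
    refine dayStep (g := dayUnit A) (𝟙 X) (t : 𝟙_ A ⟶ Y) k s (𝟙 _) ?_ (by simp)
      (Category.id_comp (t : 𝟙_ A ⟶ Y)).symm
    erw [tensorHom_id, MonoidalCategory.rightUnitor_naturality, Iso.hom_inv_id_assoc,
      id_tensorHom]
  inv_hom_id := by
    ext c s
    show f.map _ s = s
    simp

variable (A) in
/-- The Cayley functor `(A ⥤ Type) ⥤ ((A ⥤ Type) ⥤ (A ⥤ Type))` sending `f` to the
endofunctor `f ⊛ −` (Day convolution with `f` on the left). -/
def cayley : (A ⥤ Type u) ⥤ (A ⥤ Type u) ⥤ (A ⥤ Type u) := dayBi A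

/-- The data of a strong monoidal structure on the Cayley functor
`f ↦ (f ⊛ −)`, from the Day convolution monoidal structure on `A ⥤ Type` to the
composition monoidal structure on the endofunctor category of `A ⥤ Type`: the unit `J` is
sent to an endofunctor isomorphic to the identity, and `(f ⊛ g) ⊛ −` is naturally
isomorphic to the composite of `f ⊛ −` and `g ⊛ −`, coherently. -/
structure CayleyMonoidalStructure (A : Type u) [SmallCategory A] [MonoidalCategory A] where
  /-- `J ⊛ − ≅ 𝟭` -/
  εIso : (cayley A).obj (dayUnit A) ≅ 𝟭 (A ⥤ Type u)
  /-- `(f ⊛ g) ⊛ − ≅ (f ⊛ −) ∘ (g ⊛ −)` -/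
  μIso : ∀ f g : A ⥤ Type u,
    (cayley A).obj (dayFunctor f g) ≅ (cayley A).obj g ⋙ (cayley A).obj f
  /-- naturality of `μIso` in the first variable -/
  μIso_natural_left : ∀ {f f' : A ⥤ Type u} (α : f ⟶ f') (g : A ⥤ Type u),
    (cayley A).map (dayMapL α g) ≫ (μIso f' g).hom
      = (μIso f g).hom ≫ CategoryTheory.Functor.whiskerLeft ((cayley A).obj g) ((cayley A).map α)
  /-- naturality of `μIso` in the second variable -/
  μIso_natural_right : ∀ (f : A ⥤ Type u) {g g' : A ⥤ Type u} (β : g ⟶ g'),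
    (cayley A).map (dayMapR f β) ≫ (μIso f g').hom
      = (μIso f g).hom ≫ CategoryTheory.Functor.whiskerRight ((cayley A).map β) ((cayley A).obj f)
  /-- compatibility with the associativity constraints (composition of endofunctors being
  strictly associative) -/
  associativity : ∀ f g h : A ⥤ Type u,
    (μIso (dayFunctor f g) h).hom
        ≫ CategoryTheory.Functor.whiskerLeft ((cayley A).obj h) (μIso f g).hom
      = (cayley A).map (dayAssoc f g h).hom ≫ (μIso f (dayFunctor g h)).hom
        ≫ CategoryTheory.Functor.whiskerRight (μIso g h).hom ((cayley A).obj f)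
  /-- compatibility with the left unit constraints -/
  left_unitality : ∀ f : A ⥤ Type u,
    (cayley A).map (dayLeftUnitor f).hom
      = (μIso (dayUnit A) f).hom
        ≫ CategoryTheory.Functor.whiskerLeft ((cayley A).obj f) εIso.hom
        ≫ ((cayley A).obj f).rightUnitor.hom
  /-- compatibility with the right unit constraints -/
  right_unitality : ∀ f : A ⥤ Type u,
    (cayley A).map (dayRightUnitor f).hom
      = (μIso f (dayUnit A)).hom
        ≫ CategoryTheory.Functor.whiskerRight εIso.hom ((cayley A).obj f)
        ≫ ((cayley A).obj f).leftUnitor.hom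

/-! The unit and multiplication constraints of `f ↦ f ⊛ −` are the Day unitor `J ⊛ g ≅ g` and
the Day associator `(f ⊛ g) ⊛ h ≅ f ⊛ (g ⊛ h)`, read as natural transformations in `g`
resp. `h`. The coherence axioms of a monoidal functor then become, on representatives of the
coends, instances of the pentagon and triangle identities in `A`. Conservativity holds because
`f` is recovered from `f ⊛ −` by evaluating at `J`: the right unitor `f ⊛ J ≅ f` is natural
in `f`. -/

def cayleyUnitIso : (cayley A).obj (dayUnit A) ≅ 𝟭 (A ⥤ Type u) :=
  NatIso.ofComponents dayLeftUnitor (by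
    intro g g' β
    ext c ⟨X, Y, k, s, t⟩
    exact (NatTrans.naturality_apply β _ t).symm)

def cayleyMulIso (f g : A ⥤ Type u) :
    (cayley A).obj (dayFunctor f g) ≅ (cayley A).obj g ⋙ (cayley A).obj f :=
  NatIso.ofComponents (dayAssoc f g) (by
    intro h h' β
    ext c ⟨_, _, _, ⟨_⟩, _⟩
    rfl)

lemma cayleyMulIso_natural_left {f f' : A ⥤ Type u} (α : f ⟶ f') (g : A ⥤ Type u) :
    (cayley A).map (dayMapL α g) ≫ (cayleyMulIso f' g).hom
      = (cayleyMulIso f g).hom ≫ Functor.whiskerLeft ((cayley A).obj g) ((cayley A).map α) := by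
  ext h c ⟨_, _, _, ⟨_⟩, _⟩
  rfl

lemma cayleyMulIso_natural_right (f : A ⥤ Type u) {g g' : A ⥤ Type u} (β : g ⟶ g') :
    (cayley A).map (dayMapR f β) ≫ (cayleyMulIso f g').hom
      = (cayleyMulIso f g).hom ≫ Functor.whiskerRight ((cayley A).map β) ((cayley A).obj f) := by
  ext h c ⟨_, _, _, ⟨_⟩, _⟩
  rfl

lemma cayleyMulIso_associativity (f g h : A ⥤ Type u) :
    (cayleyMulIso (dayFunctor f g) h).hom
        ≫ Functor.whiskerLeft ((cayley A).obj h) (cayleyMulIso f g).hom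
      = (cayley A).map (dayAssoc f g h).hom ≫ (cayleyMulIso f (dayFunctor g h)).hom
        ≫ Functor.whiskerRight (cayleyMulIso g h).hom ((cayley A).obj f) := by
  ext e c ⟨X, Y, k, ⟨P, R, m, ⟨x, y, l, s, s'⟩, r⟩, t⟩
  refine dayStep (𝟙 x) (α_ y R Y).inv _ s _ (by dsimp only; monoidal) (by simp) ?_
  rw [dayFunctor_map_mk]
  exact congrArg (Quot.mk _) (by simp; rfl)

lemma cayleyMulIso_left_unitality (f : A ⥤ Type u) :
    (cayley A).map (dayLeftUnitor f).hom
      = (cayleyMulIso (dayUnit A) f).hom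
        ≫ Functor.whiskerLeft ((cayley A).obj f) cayleyUnitIso.hom
        ≫ ((cayley A).obj f).rightUnitor.hom := by
  ext e c ⟨X, Y, k, ⟨x, y, l, s, s'⟩, t⟩
  change 𝟙_ A ⟶ x at s
  exact (dayStep ((λ_ y).inv ≫ (s ▷ y) ≫ l) (𝟙 Y) k s' t (by dsimp only; monoidal) rfl
    (by simp)).symm

lemma cayleyMulIso_right_unitality (f : A ⥤ Type u) :
    (cayley A).map (dayRightUnitor f).hom
      = (cayleyMulIso f (dayUnit A)).hom
        ≫ Functor.whiskerRight cayleyUnitIso.hom ((cayley A).obj f)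
        ≫ ((cayley A).obj f).leftUnitor.hom := by
  ext e c ⟨X, Y, k, ⟨x, y, l, s, s'⟩, t⟩
  change 𝟙_ A ⟶ y at s'
  exact (dayStep (g := e) ((ρ_ x).inv ≫ (x ◁ s') ≫ l) (𝟙 Y) k s t rfl rfl (by simp)).symm.trans
    (dayStep (𝟙 x) ((λ_ Y).inv ≫ (s' ▷ Y) ≫ 𝟙 (y ⊗ Y)) ((α_ x y Y).inv ≫ (l ▷ Y) ≫ k) s t
      (by monoidal) (by simp) rfl)

def cayleyMonoidalStructure : CayleyMonoidalStructure A where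
  εIso := cayleyUnitIso
  μIso := cayleyMulIso
  μIso_natural_left := cayleyMulIso_natural_left
  μIso_natural_right := cayleyMulIso_natural_right
  associativity := cayleyMulIso_associativity
  left_unitality := cayleyMulIso_left_unitality
  right_unitality := cayleyMulIso_right_unitality

lemma dayRightUnitor_hom_naturality {f g : A ⥤ Type u} (α : f ⟶ g) :
    dayMapL α (dayUnit A) ≫ (dayRightUnitor g).hom = (dayRightUnitor f).hom ≫ α := by
  ext c ⟨X, Y, k, s, t⟩
  exact (NatTrans.naturality_apply α _ s).symm

instance : (cayley A).ReflectsIsomorphisms where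
  reflects {f g} α _ := by
    have : IsIso (dayMapL α (dayUnit A)) := inferInstanceAs (IsIso (((cayley A).map α).app _))
    exact IsIso.of_isIso_fac_left (dayRightUnitor_hom_naturality α).symm

/-- The Cayley functor `(A ⥤ Type) ⥤ ((A ⥤ Type) ⥤ (A ⥤ Type))` sending `f` to the
endofunctor `f ⊛ −` admits a strong monoidal structure from the Day convolution monoidal
structure on `A ⥤ Type` to the composition monoidal structure on the endofunctor category
of `A ⥤ Type`: the unit `J` is sent to an endofunctor isomorphic to the identity, and
`(f ⊛ g) ⊛ −` is naturally isomorphic to the composite of `f ⊛ −` and `g ⊛ −`, coherently;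
moreover this Cayley functor is conservative. -/
theorem cayley_strong_monoidal_conservative :
    Nonempty (CayleyMonoidalStructure A) ∧
      ∀ {f g : A ⥤ Type u} (α : f ⟶ g), IsIso ((cayley A).map α) → IsIso α :=
  ⟨⟨cayleyMonoidalStructure⟩, fun α _ => isIso_of_reflects_iso α (cayley A)⟩
end

section
/- The Cayley transform K̄ : (A ⥤ Type) ⥤ (Aᵒᵖ × A ⥤ Type), defined on objects by K̄(f)(a, b) = (Lan_{(− ⊗ a)} f)(b) = ∫^{x} A(x ⊗ a, b) × f(x) (contravariantly functorial in a, covariantly in b, and functorial in f), is conservative: if a natural transformation α : f ⟶ g of functors A ⥤ Type has K̄(α) an isomorphism, then α is an isomorphism. -/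
open CategoryTheory MonoidalCategory

universe u

variable {A : Type u} [SmallCategory A] [MonoidalCategory A]

/-- An element of the coend `∫^x A(x ⊗ a, b) × f(x)`. -/
structure KEl (f : A ⥤ Type u) (a b : A) : Type u where
  X : A
  k : X ⊗ a ⟶ b
  s : f.obj X

/-- The relation defining the coend `∫^x A(x ⊗ a, b) × f(x)`. -/
inductive KRel (f : A ⥤ Type u) (a b : A) : KEl f a b → KEl f a b → Prop
  | step {X X' : A} (u : X ⟶ X') (k : X' ⊗ a ⟶ b) (s : f.obj X) :
      KRel f a b ⟨X, (u ▷ a) ≫ k, s⟩ ⟨X', k, f.map u s⟩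

/-- The coend `∫^x A(x ⊗ a, b) × f(x)`, i.e. the value at `b` of the pointwise left Kan
extension of `f` along `− ⊗ a`. -/
def kObj (f : A ⥤ Type u) (a b : A) : Type u := Quot (KRel f a b)

variable (A) in
/-- The Cayley transform `K̄ : (A ⥤ Type) ⥤ (Aᵒᵖ × A ⥤ Type)`,
`K̄(f)(a, b) = (Lan_{(− ⊗ a)} f)(b) = ∫^x A(x ⊗ a, b) × f(x)`. -/
def Kbar : (A ⥤ Type u) ⥤ (Aᵒᵖ × A ⥤ Type u) where
  obj f :=
    { obj := fun p => kObj f p.1.unop p.2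
      map := fun {p q} h => TypeCat.ofHom <| Quot.lift
        (fun e => Quot.mk _ ⟨e.X, (e.X ◁ h.1.unop) ≫ e.k ≫ h.2, e.s⟩)
        (by
          rintro _ _ ⟨u, k, s⟩
          dsimp
          simp only [Category.assoc]
          rw [whisker_exchange_assoc]
          exact Quot.sound (KRel.step u ((_ ◁ h.1.unop) ≫ k ≫ h.2) s))
      map_id := by
        intro p
        ext e
        induction e using Quot.ind
        simp <;> rfl
      map_comp := by
        intro p q r h h'
        ext e
        induction e using Quot.ind
        change Quot.mk _ _ = Quot.mk (KRel f _ _) (KEl.mk _ (_ ◁ h'.1.unop ≫ (_ ◁ h.1.unop ≫ _ ≫ h.2) ≫ h'.2) _)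
        simp }
  map {f g} α :=
    { app := fun p => TypeCat.ofHom <| Quot.lift (fun e => Quot.mk _ ⟨e.X, e.k, α.app e.X e.s⟩)
        (by
          rintro _ _ ⟨u, k, s⟩
          dsimp
          rw [FunctorToTypes.naturality]
          exact Quot.sound (KRel.step u k (α.app _ s)))
      naturality := by
        intro p q h
        ext e
        induction e using Quot.ind
        rfl }
  map_id f := by
    ext p e
    induction e using Quot.ind
    rfl
  map_comp α β := by
    ext p e
    induction e using Quot.ind
    rfl

/-!
Restricting `K̄(f)` to `a = I` gives back `f`: since `x ⊗ I ≅ x` via the right unitor,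
co-Yoneda gives `∫^x A(x ⊗ I, b) × f x ≅ f b`, naturally in `b` and `f`. So `K̄` followed by
this restriction is isomorphic to the identity functor, and therefore `K̄` reflects isomorphisms.
-/

namespace Kbar

variable (A) in
def restrictToUnit : (Aᵒᵖ × A ⥤ Type u) ⥤ (A ⥤ Type u) :=
  (Functor.whiskeringLeft A (Aᵒᵖ × A) (Type u)).obj (Prod.sectR (Opposite.op (𝟙_ A)) A)

def unitEquiv (f : A ⥤ Type u) (b : A) : kObj f (𝟙_ A) b ≃ f.obj b where
  toFun := Quot.lift (fun e => f.map ((ρ_ e.X).inv ≫ e.k) e.s) <| by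
    rintro _ _ ⟨u, k, s⟩
    dsimp
    rw [← Functor.map_comp_apply, rightUnitor_inv_naturality_assoc]
  invFun s := Quot.mk _ ⟨b, (ρ_ b).hom, s⟩
  left_inv := by
    -- `⟨X, k, s⟩ ~ ⟨b, ρ_ b, f.map (ρ⁻¹ ≫ k) s⟩` is a single `KRel.step` along `ρ⁻¹ ≫ k`.
    rintro ⟨X, k, s⟩
    refine (Quot.sound (KRel.step ((ρ_ X).inv ≫ k) (ρ_ b).hom s)).symm.trans ?_
    simp
  right_inv s := by simp

lemma unitEquiv_map (f : A ⥤ Type u) {b c : A} (h : b ⟶ c) (e : kObj f (𝟙_ A) b) :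
    unitEquiv f c (((Kbar A).obj f).map ((𝟙 _, h) : (Opposite.op (𝟙_ A), b) ⟶ (_, c)) e) =
      f.map h (unitEquiv f b e) := by
  induction e using Quot.ind with | mk e => ?_
  change f.map ((ρ_ e.X).inv ≫ e.X ◁ 𝟙 (𝟙_ A) ≫ e.k ≫ h) e.s =
    f.map h (f.map ((ρ_ e.X).inv ≫ e.k) e.s)
  simp

def unitIso : Kbar A ⋙ restrictToUnit A ≅ 𝟭 (A ⥤ Type u) :=
  NatIso.ofComponents
    (fun f => NatIso.ofComponents (fun b => (unitEquiv f b).toIso) fun h => by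
      ext e
      exact unitEquiv_map f h e)
    fun α => by
      ext b ⟨X, k, s⟩
      exact (NatTrans.naturality_apply α _ s).symm

instance : (Kbar A).ReflectsIsomorphisms :=
  have := reflectsIsomorphisms_of_iso (unitIso (A := A)).symm
  reflectsIsomorphisms_of_comp (Kbar A) (restrictToUnit A)

end Kbar

/-- The Cayley transform `K̄ : (A ⥤ Type) ⥤ (Aᵒᵖ × A ⥤ Type)`,
`K̄(f)(a,b) = (Lan_{(− ⊗ a)} f)(b) = ∫^x A(x ⊗ a, b) × f(x)`, is conservative:
if a natural transformation `α : f ⟶ g` of functors `A ⥤ Type` has `K̄(α)` an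
isomorphism, then `α` is an isomorphism. -/
theorem Kbar_conservative {f g : A ⥤ Type u} (α : f ⟶ g)
    (H : IsIso ((Kbar A).map α)) : IsIso α :=
  isIso_of_reflects_iso α (Kbar A)
end
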